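/- arXiv:1405.4270 — 7 statements merged into one kernel-verified Lean document; each statement's English description precedes it below -/
import Mathlib

section
/- For every real α > 0, the function u(t) = t^α / (e^{t^α} − 1), defined for t > 0, is decreasing on (0, ∞); moreover, if 0 < α ≤ 1, then u is convex on (0, ∞). -/
/-!
With `g x = x / (exp x - 1)` we have `u = g ∘ (· ^ α)`. The map `t ↦ t ^ α` is an increasing
bijection of `(0, ∞)`, concave when `α ≤ 1`, so it suffices that `g` is decreasing and convex on
`(0, ∞)`. Both follow from the signs of
`g' x = (exp x - 1 - x exp x) / (exp x - 1) ^ 2` and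
`g'' x = exp x ((x - 2) exp x + x + 2) / (exp x - 1) ^ 3`:
the first numerator is `≤ 0` by `exp (-x) ≥ 1 - x`, and the bracket in the second vanishes at
`0` and has derivative `(x - 1) exp x + 1 ≥ 0`.
-/

open Real Set

lemma one_sub_mul_exp_le_one (x : ℝ) : (1 - x) * exp x ≤ 1 := by
  have h := mul_le_mul_of_nonneg_right (add_one_le_exp (-x)) (exp_pos x).le
  rwa [← exp_add, neg_add_cancel, exp_zero, neg_add_eq_sub] at h

lemma two_sub_mul_exp_le_two_add {x : ℝ} (hx : 0 ≤ x) : (2 - x) * exp x ≤ 2 + x := by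
  let φ : ℝ → ℝ := fun x => (x - 2) * exp x + x + 2
  have hderiv (y : ℝ) : HasDerivAt φ ((y - 1) * exp y + 1) y := by
    have := ((((hasDerivAt_id' y).sub_const 2).mul (hasDerivAt_exp y)).add
      (hasDerivAt_id' y)).add_const 2
    exact this.congr_deriv (by ring)
  have hmono : MonotoneOn φ (Ici 0) := by
    refine monotoneOn_of_hasDerivWithinAt_nonneg (convex_Ici 0)
      (fun y _ => (hderiv y).continuousAt.continuousWithinAt)
      (fun y _ => (hderiv y).hasDerivWithinAt) fun y _ => ?_
    linarith [one_sub_mul_exp_le_one y]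
  have := hmono self_mem_Ici hx hx
  norm_num [φ] at this
  linarith

lemma exp_sub_one_ne_zero {x : ℝ} (hx : x ≠ 0) : exp x - 1 ≠ 0 :=
  sub_ne_zero.2 ((exp_eq_one_iff x).not.2 hx)

lemma hasDerivAt_div_exp_sub_one {x : ℝ} (hx : x ≠ 0) :
    HasDerivAt (fun x => x / (exp x - 1)) ((exp x - 1 - x * exp x) / (exp x - 1) ^ 2) x := by
  have := (hasDerivAt_id' x).div ((hasDerivAt_exp x).sub_const 1) (exp_sub_one_ne_zero hx)
  exact this.congr_deriv (by ring)

lemma hasDerivAt_deriv_div_exp_sub_one {x : ℝ} (hx : x ≠ 0) :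
    HasDerivAt (fun x => (exp x - 1 - x * exp x) / (exp x - 1) ^ 2)
      (exp x * ((x - 2) * exp x + x + 2) / (exp x - 1) ^ 3) x := by
  have hE := (hasDerivAt_exp x).sub_const 1
  have hN := hE.fun_sub ((hasDerivAt_id' x).fun_mul (hasDerivAt_exp x))
  have hE0 := exp_sub_one_ne_zero hx
  refine (hN.div (hE.fun_pow 2) (pow_ne_zero 2 hE0)).congr_deriv ?_
  field_simp
  ring

lemma antitoneOn_div_exp_sub_one : AntitoneOn (fun x => x / (exp x - 1)) (Ioi 0) := by
  refine antitoneOn_of_hasDerivWithinAt_nonpos (convex_Ioi 0)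
    (fun x hx => (hasDerivAt_div_exp_sub_one hx.ne').continuousAt.continuousWithinAt)
    (fun x hx => (hasDerivAt_div_exp_sub_one (interior_subset hx).ne').hasDerivWithinAt)
    fun x _ => div_nonpos_of_nonpos_of_nonneg ?_ (sq_nonneg _)
  linarith [one_sub_mul_exp_le_one x]

lemma convexOn_div_exp_sub_one : ConvexOn ℝ (Ioi 0) (fun x => x / (exp x - 1)) := by
  refine convexOn_of_hasDerivWithinAt2_nonneg (convex_Ioi 0)
    (fun x hx => (hasDerivAt_div_exp_sub_one hx.ne').continuousAt.continuousWithinAt)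
    (fun x hx => (hasDerivAt_div_exp_sub_one (interior_subset hx).ne').hasDerivWithinAt)
    (fun x hx =>
      (hasDerivAt_deriv_div_exp_sub_one (interior_subset hx).ne').hasDerivWithinAt)
    fun x hx => ?_
  rw [interior_Ioi] at hx
  have hE : 0 < exp x - 1 := sub_pos.2 (one_lt_exp_iff.2 hx)
  have hB : 0 ≤ (x - 2) * exp x + x + 2 := by linarith [two_sub_mul_exp_le_two_add hx.le]
  positivity

lemma image_rpow_Ioi_zero {α : ℝ} (hα : α ≠ 0) : (fun t : ℝ => t ^ α) '' Ioi 0 = Ioi 0 := by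
  refine Subset.antisymm (image_subset_iff.2 fun t ht => rpow_pos_of_pos ht α) fun y hy =>
    ⟨y ^ α⁻¹, rpow_pos_of_pos hy _, rpow_inv_rpow (le_of_lt hy) hα⟩

/-- For every real `α > 0`, the function `u(t) = t^α / (e^{t^α} − 1)` is decreasing
on `(0, ∞)`; moreover, if `0 < α ≤ 1`, then `u` is convex on `(0, ∞)`. -/
theorem weibull_u_antitone_and_convex (α : ℝ) (hα : 0 < α) :
    AntitoneOn (fun t : ℝ => t ^ α / (exp (t ^ α) - 1)) (Ioi (0 : ℝ)) ∧
    (α ≤ 1 → ConvexOn ℝ (Ioi (0 : ℝ)) (fun t : ℝ => t ^ α / (exp (t ^ α) - 1))) := by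
  have himage := image_rpow_Ioi_zero hα.ne'
  have hmono : MonotoneOn (fun t : ℝ => t ^ α) (Ioi 0) :=
    (monotoneOn_rpow_Ici_of_exponent_nonneg hα.le).mono Ioi_subset_Ici_self
  refine ⟨antitoneOn_div_exp_sub_one.comp_MonotoneOn hmono fun t ht => rpow_pos_of_pos ht α,
    fun hα1 => ?_⟩
  have hconcave : ConcaveOn ℝ (Ioi 0) (fun t : ℝ => t ^ α) :=
    (concaveOn_rpow hα.le hα1).subset Ioi_subset_Ici_self (convex_Ioi 0)
  exact ConvexOn.comp_concaveOn (f := fun t : ℝ => t ^ α) (g := fun x => x / (exp x - 1))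
    (himage.symm ▸ convexOn_div_exp_sub_one) hconcave (himage.symm ▸ antitoneOn_div_exp_sub_one)
end

section
/- The function ψ₃(t) = t e^t (1 + t − e^t) / (e^t − 1)^3, defined for t > 0, is increasing on (0, ∞). -/
/-!
Differentiating, `ψ₃'(t) = e^t K(t) / (e^t - 1)^4` with
`K(t) = (t - 1) e^{2t} + 2 (1 + t - t²) e^t - (t² + 3t + 1)` (`psi3DerivNum`), so it suffices
that `K ≥ 0` on `[0, ∞)`. Functions of the shape `p(t) e^{2t} + q(t) e^t + r(t)` with `p, q, r`
of degree at most two are closed under differentiation; `K` and its first two derivatives vanish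
at `0`, and its third derivative is nonnegative on `[0, ∞)` by `e^t ≥ 1 + t + t²/2`.
-/

open Real Set

noncomputable section

def expQuad (a b c d e f g h i t : ℝ) : ℝ :=
  (a + b * t + c * t ^ 2) * exp t ^ 2 + (d + e * t + f * t ^ 2) * exp t + (g + h * t + i * t ^ 2)

def psi3 (t : ℝ) : ℝ := t * exp t * (1 + t - exp t) / (exp t - 1) ^ 3

def psi3DerivNum (t : ℝ) : ℝ := expQuad (-1) 1 0 2 2 (-2) (-1) (-3) (-1) t

end

section ExpQuad

variable {a b c d e f g h i : ℝ}

theorem hasDerivAt_expQuad (t : ℝ) :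
    HasDerivAt (expQuad a b c d e f g h i)
      (expQuad (2 * a + b) (2 * b + 2 * c) (2 * c) (d + e) (e + 2 * f) f h (2 * i) 0 t) t := by
  have hquad : ∀ a b c : ℝ, HasDerivAt (fun t ↦ a + b * t + c * t ^ 2) (b + c * (2 * t)) t :=
    fun a b c ↦ ((((hasDerivAt_id' t).const_mul b).const_add a).add
      ((hasDerivAt_pow 2 t).const_mul c)).congr_deriv (by norm_num)
  have hexp := hasDerivAt_exp t
  have hexp2 : HasDerivAt (fun t ↦ exp t ^ 2) (2 * exp t * exp t) t :=
    (hexp.pow 2).congr_deriv (by ring)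
  refine (((hquad a b c).mul hexp2).add ((hquad d e f).mul hexp)).add (hquad g h i)
    |>.congr_deriv ?_
  simp only [expQuad]
  ring

theorem expQuad_nonneg_of_deriv_nonneg (h₀ : a + d + g = 0)
    (hderiv : ∀ t, 0 ≤ t →
      0 ≤ expQuad (2 * a + b) (2 * b + 2 * c) (2 * c) (d + e) (e + 2 * f) f h (2 * i) 0 t)
    {t : ℝ} (ht : 0 ≤ t) : 0 ≤ expQuad a b c d e f g h i t := by
  have hmono : MonotoneOn (expQuad a b c d e f g h i) (Ici 0) :=
    monotoneOn_of_hasDerivWithinAt_nonneg (convex_Ici 0)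
      (fun s _ ↦ (hasDerivAt_expQuad s).continuousAt.continuousWithinAt)
      (fun s _ ↦ (hasDerivAt_expQuad s).hasDerivWithinAt)
      (fun s hs ↦ hderiv s (interior_subset hs))
  have hzero : expQuad a b c d e f g h i 0 = 0 := by
    simp only [expQuad, exp_zero]
    linarith
  exact hzero ▸ hmono self_mem_Ici ht ht

end ExpQuad

theorem psi3DerivNum_nonneg {t : ℝ} (ht : 0 ≤ t) : 0 ≤ psi3DerivNum t := by
  unfold psi3DerivNum
  refine expQuad_nonneg_of_deriv_nonneg (by norm_num) (fun s hs ↦ ?_) ht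
  norm_num
  refine expQuad_nonneg_of_deriv_nonneg (by norm_num) (fun s hs ↦ ?_) hs
  norm_num
  refine expQuad_nonneg_of_deriv_nonneg (by norm_num) (fun s hs ↦ ?_) hs
  norm_num
  have hbracket : 0 ≤ (4 + 8 * s) * exp s - (4 + 10 * s + 2 * s ^ 2) := by
    nlinarith [quadratic_le_exp_of_nonneg hs]
  have hfactor : expQuad 4 8 0 (-4) (-10) (-2) 0 0 0 s =
      exp s * ((4 + 8 * s) * exp s - (4 + 10 * s + 2 * s ^ 2)) := by
    simp only [expQuad]
    ring
  rw [hfactor]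
  positivity

theorem hasDerivAt_psi3 {t : ℝ} (ht : t ≠ 0) :
    HasDerivAt psi3 (exp t * psi3DerivNum t / (exp t - 1) ^ 4) t := by
  have hexp := hasDerivAt_exp t
  have hden : exp t - 1 ≠ 0 := sub_ne_zero.2 (mt (exp_eq_one_iff t).1 ht)
  have hnum : HasDerivAt (fun t ↦ t * exp t * (1 + t - exp t))
      ((exp t + t * exp t) * (1 + t - exp t) + t * exp t * (1 - exp t)) t :=
    (((hasDerivAt_id t).mul hexp).congr_deriv (by simp)).mul
      (((hasDerivAt_id t).const_add 1).sub hexp)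
  have hden3 : HasDerivAt (fun t ↦ (exp t - 1) ^ 3) (3 * (exp t - 1) ^ 2 * exp t) t :=
    ((hexp.sub_const 1).pow 3).congr_deriv (by norm_num)
  refine (hnum.div hden3 (pow_ne_zero 3 hden)).congr_deriv ?_
  simp only [psi3DerivNum, expQuad]
  field_simp
  ring

/-- The function `ψ₃(t) = t e^t (1 + t − e^t) / (e^t − 1)^3` is increasing on `(0, ∞)`. -/
theorem psi3_monotone :
    MonotoneOn (fun t : ℝ => t * exp t * (1 + t - exp t) / (exp t - 1) ^ 3)
      (Ioi (0 : ℝ)) := by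
  have hderiv : ∀ t ∈ Ioi (0 : ℝ),
      HasDerivAt psi3 (exp t * psi3DerivNum t / (exp t - 1) ^ 4) t :=
    fun t ht ↦ hasDerivAt_psi3 ht.ne'
  refine monotoneOn_of_hasDerivWithinAt_nonneg (convex_Ioi 0)
    (fun t ht ↦ (hderiv t ht).continuousAt.continuousWithinAt)
    (fun t ht ↦ (hderiv t (interior_subset ht)).hasDerivWithinAt) (fun t ht ↦ ?_)
  have ht : 0 < t := interior_subset ht
  have hK := psi3DerivNum_nonneg ht.le
  positivity
end

section
/- For every real α with 0 < α ≤ 1, the function w(t) = α t^{2α−1} e^{t^α} (1 + t^α − e^{t^α}) / (e^{t^α} − 1)^3, defined for t > 0, is increasing on (0, ∞). -/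
open Real Set

/-!
Substituting `x = t ^ α`, one has `w t = α * x ^ (1 - 1 / α) * K x` with
`K x = x eˣ (1 + x - eˣ) / (eˣ - 1)³`. Since `1 - 1 / α ≤ 0`, the factor `x ^ (1 - 1 / α)` is
positive and nonincreasing, while `K` is nonpositive and nondecreasing; so their product is
nondecreasing in `x`, hence in `t`. The monotonicity of `K` reduces to the nonnegativity of
`(x - 1) e²ˣ + (2 + 2x - 2x²) eˣ - (1 + 3x + x²)` on `[0, ∞)`: this function and its first
three derivatives vanish at `0`, and its fourth derivative is nonnegative by `eˣ ≥ 1 + x`.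
-/

lemma AntitoneOn.mul_monotoneOn_of_nonpos {α R : Type*} [Preorder α] [Ring R] [PartialOrder R]
    [IsOrderedRing R] {f g : α → R} {s : Set α} (hf : AntitoneOn f s) (hg : MonotoneOn g s)
    (hf₀ : ∀ x ∈ s, 0 ≤ f x) (hg₀ : ∀ x ∈ s, g x ≤ 0) : MonotoneOn (f * g) s :=
  fun a ha b hb hab => calc
    f a * g a ≤ f b * g a := mul_le_mul_of_nonpos_right (hf ha hb hab) (hg₀ a ha)
    _ ≤ f b * g b := mul_le_mul_of_nonneg_left (hg ha hb hab) (hf₀ b hb)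

lemma nonneg_of_deriv_nonneg {f : ℝ → ℝ} (hf : Differentiable ℝ f) (h0 : 0 ≤ f 0)
    (hf' : ∀ x, 0 < x → 0 ≤ deriv f x) : ∀ x, 0 ≤ x → 0 ≤ f x := fun x hx =>
  h0.trans <| monotoneOn_of_deriv_nonneg (convex_Ici 0) hf.continuous.continuousOn
    hf.differentiableOn (fun y hy => hf' y (by rwa [interior_Ici] at hy)) self_mem_Ici hx hx

lemma exp_sq_poly_nonneg : ∀ x : ℝ, 0 ≤ x →
    0 ≤ (x - 1) * exp x ^ 2 + (2 + 2 * x - 2 * x ^ 2) * exp x - (1 + 3 * x + x ^ 2) := by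
  have h4 : ∀ x : ℝ, 0 ≤ x →
      0 ≤ (16 + 16 * x) * exp x ^ 2 - (14 + 14 * x + 2 * x ^ 2) * exp x := fun x hx => by
    have := mul_le_mul_of_nonneg_left (add_one_le_exp x)
      (by positivity : 0 ≤ (16 + 16 * x) * exp x)
    nlinarith [exp_pos x]
  have h3 : ∀ x : ℝ, 0 ≤ x →
      0 ≤ (4 + 8 * x) * exp x ^ 2 - (4 + 10 * x + 2 * x ^ 2) * exp x :=
    nonneg_of_deriv_nonneg (by fun_prop) (by norm_num) fun y hy => by
      simp (disch := fun_prop); linear_combination h4 y hy.le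
  have h2 : ∀ x : ℝ, 0 ≤ x →
      0 ≤ 4 * x * exp x ^ 2 + (2 - 6 * x - 2 * x ^ 2) * exp x - 2 :=
    nonneg_of_deriv_nonneg (by fun_prop) (by norm_num) fun y hy => by
      simp (disch := fun_prop); linear_combination h3 y hy.le
  have h1 : ∀ x : ℝ, 0 ≤ x →
      0 ≤ (2 * x - 1) * exp x ^ 2 + (4 - 2 * x - 2 * x ^ 2) * exp x - (3 + 2 * x) :=
    nonneg_of_deriv_nonneg (by fun_prop) (by norm_num) fun y hy => by
      simp (disch := fun_prop); linear_combination h2 y hy.le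
  exact nonneg_of_deriv_nonneg (by fun_prop) (by norm_num) fun y hy => by
    simp (disch := fun_prop); linear_combination h1 y hy.le

noncomputable def weibullKernel (x : ℝ) : ℝ := x * exp x * (1 + x - exp x) / (exp x - 1) ^ 3

lemma weibullKernel_nonpos {x : ℝ} (hx : 0 < x) : weibullKernel x ≤ 0 := by
  have hexp : 1 + x ≤ exp x := by linarith [add_one_le_exp x]
  have hexp_one : 1 < exp x := one_lt_exp_iff.2 hx
  exact div_nonpos_of_nonpos_of_nonneg
    (mul_nonpos_of_nonneg_of_nonpos (by positivity) (by linarith)) (pow_nonneg (by linarith) 3)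

lemma weibullKernel_monotoneOn : MonotoneOn weibullKernel (Ioi 0) := by
  have hD {x : ℝ} (hx : 0 < x) : (exp x - 1) ^ 3 ≠ 0 :=
    pow_ne_zero _ (sub_ne_zero.2 (one_lt_exp_iff.2 hx).ne')
  have hdiff : DifferentiableOn ℝ weibullKernel (Ioi 0) := fun x hx =>
    DifferentiableAt.differentiableWithinAt <| by
      unfold weibullKernel
      fun_prop (disch := exact hD hx)
  refine monotoneOn_of_deriv_nonneg (convex_Ioi 0) hdiff.continuousOn
    (by rwa [interior_Ioi]) fun x hx => ?_
  rw [interior_Ioi, mem_Ioi] at hx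
  have hderiv : deriv weibullKernel x = (exp x - 1) ^ 2 * exp x *
      ((x - 1) * exp x ^ 2 + (2 + 2 * x - 2 * x ^ 2) * exp x - (1 + 3 * x + x ^ 2)) /
        ((exp x - 1) ^ 3) ^ 2 := by
    unfold weibullKernel
    simp (disch := first | fun_prop | exact hD hx) [deriv_fun_div]
    ring
  rw [hderiv]
  exact div_nonneg (mul_nonneg (by positivity) (exp_sq_poly_nonneg x hx.le)) (by positivity)

/-- For `0 < α ≤ 1`, the function
`w(t) = α t^{2α−1} e^{t^α} (1 + t^α − e^{t^α}) / (e^{t^α} − 1)^3` is increasing on `(0, ∞)`. -/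
theorem weibull_w_monotone (α : ℝ) (hα : 0 < α) (hα1 : α ≤ 1) :
    MonotoneOn
      (fun t : ℝ =>
        α * t ^ (2 * α - 1) * exp (t ^ α) * (1 + t ^ α - exp (t ^ α)) /
          (exp (t ^ α) - 1) ^ 3)
      (Ioi (0 : ℝ)) := by
  have hc : 1 - 1 / α ≤ 0 := by
    rw [sub_nonpos, le_div_iff₀ hα]
    linarith
  have hg : MonotoneOn (fun x => x ^ (1 - 1 / α) * weibullKernel x) (Ioi 0) :=
    (antitoneOn_rpow_Ioi_of_exponent_nonpos hc).mul_monotoneOn_of_nonpos weibullKernel_monotoneOn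
      (fun x hx => (rpow_pos_of_pos hx _).le) fun x hx => weibullKernel_nonpos hx
  have hpow : MonotoneOn (fun t : ℝ => t ^ α) (Ioi 0) :=
    (monotoneOn_rpow_Ici_of_exponent_nonneg hα.le).mono Ioi_subset_Ici_self
  refine ((monotone_mul_left_of_nonneg hα.le).comp_monotoneOn
    (hg.comp hpow fun t ht => rpow_pos_of_pos ht α)).congr fun t ht => ?_
  have hexponent : (t ^ α) ^ (1 - 1 / α) * t ^ α = t ^ (2 * α - 1) := by
    rw [← rpow_mul ht.le, ← rpow_add ht]
    congr 1
    field_simp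
    ring
  simp only [Function.comp_apply, weibullKernel, ← hexponent]
  ring
end

section
/- Fix a real α with 0 < α ≤ 1 and t > 0, and let λ₁,…,λₙ > 0 and θ₁,…,θₙ > 0 be two families of positive reals such that (λ₁,…,λₙ) is weakly majorized by (θ₁,…,θₙ). Then for every t > 0, the reverse hazard rate of the parallel system satisfies r_{n:n}^λ(t) ≤ r_{n:n}^θ(t), where r_{n:n}^λ(t) = Σ_{i=1}^n α λᵢ^α t^{α−1} / (e^{(λᵢ t)^α} − 1); equivalently, the ratio of distribution functions Π_{i=1}^n (1 − e^{−(θᵢ t)^α}) / Π_{i=1}^n (1 − e^{−(λᵢ t)^α}) is increasing in t on (0, ∞), i.e., the lifetime of the parallel system with scale parameters λ is smaller in the reverse hazard rate order than the one with scale parameters θ. -/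
open Real Set

/-!
Put `ψ(u) = u / (eᵘ - 1)`. The `i`-th summand of the reverse hazard rate at `t` is
`(α / t) ψ((λᵢ t)^α)`. Since `ψ` is convex and decreasing on `(0, ∞)` and `z ↦ z^α` is concave
and increasing for `0 ≤ α ≤ 1`, the map `z ↦ ψ(z^α)` is convex and decreasing, and for such
functions weak majorization `λ t ≼ʷ θ t` gives `∑ ψ((λᵢ t)^α) ≤ ∑ ψ((θᵢ t)^α)` (Tomić–Weyl).
Finally `F_θ / F_λ` has derivative `(F_θ / F_λ) (r_θ - r_λ) ≥ 0`.
-/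

/-- `x` is weakly majorized (from below) by `y`: for every `j`, the sum of the `j`
smallest components of `x` is at least the sum of the `j` smallest components of `y`.
Equivalently: for every subset `s` of indices there is a subset `u` of the same
cardinality with `∑_{i ∈ u} y i ≤ ∑_{i ∈ s} x i`. -/
def WeaklyMajorizedBy {n : ℕ} (x y : Fin n → ℝ) : Prop :=
  ∀ s : Finset (Fin n), ∃ u : Finset (Fin n),
    u.card = s.card ∧ ∑ i ∈ u, y i ≤ ∑ i ∈ s, x i

theorem sum_range_mul_nonpos_of_monotoneOn {c d : ℕ → ℝ} {n : ℕ}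
    (hc : MonotoneOn c (Iio n)) (hc₀ : ∀ k < n, c k ≤ 0)
    (hd : ∀ j ≤ n, 0 ≤ ∑ k ∈ Finset.range j, d k) :
    ∑ k ∈ Finset.range n, c k * d k ≤ 0 := by
  rcases Nat.eq_zero_or_pos n with rfl | hn
  · simp
  have hparts := Finset.sum_range_by_parts c d n
  simp only [smul_eq_mul] at hparts
  rw [hparts, sub_nonpos]
  calc c (n - 1) * ∑ k ∈ Finset.range n, d k ≤ 0 :=
        mul_nonpos_of_nonpos_of_nonneg (hc₀ _ (Nat.sub_lt hn one_pos)) (hd n le_rfl)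
    _ ≤ _ := Finset.sum_nonneg fun i hi => by
        have hi : i + 1 < n := by rw [Finset.mem_range] at hi; omega
        exact mul_nonneg (sub_nonneg.2 (hc (i.lt_succ_self.trans hi) hi i.le_succ)) (hd _ hi.le)

theorem ConvexOn.deriv_mul_sub_le_sub {S : Set ℝ} {f : ℝ → ℝ} {x y : ℝ} (hf : ConvexOn ℝ S f)
    (hx : x ∈ S) (hy : y ∈ S) (hfx : DifferentiableAt ℝ f x) :
    deriv f x * (y - x) ≤ f y - f x := by
  rcases lt_trichotomy x y with hxy | rfl | hyx
  · have := hf.deriv_le_slope hx hy hxy hfx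
    rwa [slope_def_field, le_div_iff₀ (sub_pos.2 hxy)] at this
  · simp
  · have := hf.slope_le_deriv hy hx hyx hfx
    rw [slope_def_field, div_le_iff₀ (sub_pos.2 hyx)] at this
    linarith

/- The tangent lines at the `X k` bound the difference by `∑ g'(X k) (X k - Y k)`, which is
nonpositive by Abel summation: `g'(X k)` is nonpositive and increasing in `k`, and the partial
sums of `X - Y` are nonnegative. -/
theorem sum_range_le_sum_range_of_convexOn_of_antitoneOn {s : Set ℝ} {g : ℝ → ℝ}
    (hs : IsOpen s) (hg : ConvexOn ℝ s g) (hg' : AntitoneOn g s)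
    (hgd : ∀ z ∈ s, DifferentiableAt ℝ g z) {X Y : ℕ → ℝ} {n : ℕ}
    (hXs : ∀ k < n, X k ∈ s) (hYs : ∀ k < n, Y k ∈ s) (hX : MonotoneOn X (Iio n))
    (hXY : ∀ j ≤ n, ∑ k ∈ Finset.range j, Y k ≤ ∑ k ∈ Finset.range j, X k) :
    ∑ k ∈ Finset.range n, g (X k) ≤ ∑ k ∈ Finset.range n, g (Y k) := by
  have htangent : ∀ k ∈ Finset.range n,
      g (X k) - g (Y k) ≤ deriv g (X k) * (X k - Y k) := fun k hk => by
    rw [Finset.mem_range] at hk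
    have := hg.deriv_mul_sub_le_sub (hXs k hk) (hYs k hk) (hgd _ (hXs k hk))
    linarith
  have habel : ∑ k ∈ Finset.range n, deriv g (X k) * (X k - Y k) ≤ 0 := by
    refine sum_range_mul_nonpos_of_monotoneOn (fun a ha b hb hab => ?_) (fun k hk => ?_)
      fun j hj => ?_
    · exact hg.monotoneOn_deriv hgd (hXs a ha) (hXs b hb) (hX ha hb hab)
    · exact (hgd _ (hXs k hk)).hasDerivAt.hasDerivWithinAt.nonpos_of_antitoneOn
        (hs.preperfect _ (hXs k hk)) hg'
    · rw [Finset.sum_sub_distrib, sub_nonneg]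
      exact hXY j hj
  have := Finset.sum_le_sum htangent
  rw [Finset.sum_sub_distrib] at this
  linarith

theorem Fin.val_le_val_of_strictMono {j n : ℕ} {e : Fin j → Fin n} (he : StrictMono e)
    (k : Fin j) : (k : ℕ) ≤ e k := by
  obtain ⟨k, hk⟩ := k
  induction k with
  | zero => exact Nat.zero_le _
  | succ k ih =>
    have := he (show (⟨k, by omega⟩ : Fin j) < ⟨k + 1, hk⟩ from Fin.mk_lt_mk.2 k.lt_succ_self)
    exact (ih (by omega)).trans_lt this

theorem Monotone.sum_castLE_le_sum {n j : ℕ} {f : Fin n → ℝ} (hf : Monotone f)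
    {v : Finset (Fin n)} (hv : v.card = j) (hj : j ≤ n) :
    ∑ k : Fin j, f (Fin.castLE hj k) ≤ ∑ i ∈ v, f i := by
  rw [← Finset.map_orderEmbOfFin_univ v hv, Finset.sum_map]
  exact Finset.sum_le_sum fun k _ =>
    hf (Fin.val_le_val_of_strictMono (v.orderEmbOfFin hv).strictMono k)

section SortedSeq

variable {n : ℕ} (x : Fin n → ℝ)

-- Padded with zeros past `n`, so that prefix sums and Abel summation live on `Finset.range`.
noncomputable def sortedSeq (k : ℕ) : ℝ :=
  if h : k < n then x (Tuple.sort x ⟨k, h⟩) else 0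

theorem sortedSeq_of_lt {k : ℕ} (hk : k < n) : sortedSeq x k = x (Tuple.sort x ⟨k, hk⟩) :=
  dif_pos hk

theorem monotoneOn_sortedSeq : MonotoneOn (sortedSeq x) (Iio n) := fun a ha b hb hab => by
  rw [sortedSeq_of_lt x ha, sortedSeq_of_lt x hb]
  exact Tuple.monotone_sort x (Fin.mk_le_mk.2 hab)

theorem sum_range_sortedSeq_eq {j : ℕ} (hj : j ≤ n) :
    ∑ k ∈ Finset.range j, sortedSeq x k = ∑ k : Fin j, x (Tuple.sort x (Fin.castLE hj k)) := by
  rw [← Fin.sum_univ_eq_sum_range]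
  exact Finset.sum_congr rfl fun k _ => sortedSeq_of_lt x (k.2.trans_le hj)

theorem sum_range_comp_sortedSeq (f : ℝ → ℝ) :
    ∑ k ∈ Finset.range n, f (sortedSeq x k) = ∑ i, f (x i) := by
  rw [← Fin.sum_univ_eq_sum_range (fun k => f (sortedSeq x k))]
  exact (Finset.sum_congr rfl fun i _ => by rw [sortedSeq_of_lt x i.2]).trans
    (Equiv.sum_comp (Tuple.sort x) fun i => f (x i))

theorem sum_range_sortedSeq_le_sum (s : Finset (Fin n)) :
    ∑ k ∈ Finset.range s.card, sortedSeq x k ≤ ∑ i ∈ s, x i := by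
  have hs : s.card ≤ n := (Finset.card_le_univ s).trans_eq (Fintype.card_fin n)
  have hv : (s.map (Tuple.sort x).symm.toEmbedding).card = s.card := Finset.card_map _
  calc ∑ k ∈ Finset.range s.card, sortedSeq x k
      = ∑ k : Fin s.card, x (Tuple.sort x (Fin.castLE hs k)) := sum_range_sortedSeq_eq x hs
    _ ≤ ∑ i ∈ s.map (Tuple.sort x).symm.toEmbedding, x (Tuple.sort x i) :=
        (Tuple.monotone_sort x).sum_castLE_le_sum hv hs
    _ = ∑ i ∈ s, x i := by simp [Finset.sum_map]

theorem exists_card_eq_sum_eq_sum_range_sortedSeq {j : ℕ} (hj : j ≤ n) :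
    ∃ s : Finset (Fin n), s.card = j ∧ ∑ i ∈ s, x i = ∑ k ∈ Finset.range j, sortedSeq x k := by
  let e : Fin j ↪ Fin n := (Fin.castLEEmb hj).trans (Tuple.sort x).toEmbedding
  refine ⟨Finset.univ.map e, by simp, ?_⟩
  rw [Finset.sum_map, sum_range_sortedSeq_eq x hj]
  rfl

end SortedSeq

theorem WeaklyMajorizedBy.sum_range_sortedSeq_le {n : ℕ} {x y : Fin n → ℝ}
    (h : WeaklyMajorizedBy x y) {j : ℕ} (hj : j ≤ n) :
    ∑ k ∈ Finset.range j, sortedSeq y k ≤ ∑ k ∈ Finset.range j, sortedSeq x k := by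
  obtain ⟨s, hsj, hsx⟩ := exists_card_eq_sum_eq_sum_range_sortedSeq x hj
  obtain ⟨u, hus, huy⟩ := h s
  calc ∑ k ∈ Finset.range j, sortedSeq y k ≤ ∑ i ∈ u, y i := by
        simpa only [hus, hsj] using sum_range_sortedSeq_le_sum y u
    _ ≤ ∑ i ∈ s, x i := huy
    _ = _ := hsx

theorem WeaklyMajorizedBy.sum_le_sum_of_convexOn_of_antitoneOn {n : ℕ} {x y : Fin n → ℝ}
    (h : WeaklyMajorizedBy x y) {s : Set ℝ} {g : ℝ → ℝ} (hs : IsOpen s) (hg : ConvexOn ℝ s g)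
    (hg' : AntitoneOn g s) (hgd : ∀ z ∈ s, DifferentiableAt ℝ g z) (hx : ∀ i, x i ∈ s)
    (hy : ∀ i, y i ∈ s) :
    ∑ i, g (x i) ≤ ∑ i, g (y i) := by
  rw [← sum_range_comp_sortedSeq x g, ← sum_range_comp_sortedSeq y g]
  refine sum_range_le_sum_range_of_convexOn_of_antitoneOn hs hg hg' hgd (fun k hk => ?_)
    (fun k hk => ?_) (monotoneOn_sortedSeq x) fun j hj => h.sum_range_sortedSeq_le hj
  · rw [sortedSeq_of_lt x hk]; exact hx _
  · rw [sortedSeq_of_lt y hk]; exact hy _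

theorem WeaklyMajorizedBy.mul_const {n : ℕ} {x y : Fin n → ℝ} (h : WeaklyMajorizedBy x y)
    {c : ℝ} (hc : 0 ≤ c) : WeaklyMajorizedBy (fun i => x i * c) (fun i => y i * c) := by
  intro s
  obtain ⟨u, hus, huy⟩ := h s
  exact ⟨u, hus, by simpa only [← Finset.sum_mul] using mul_le_mul_of_nonneg_right huy hc⟩

theorem ConvexOn.comp_concaveOn_of_mapsTo {𝕜 E α β : Type*} [Semiring 𝕜] [PartialOrder 𝕜]
    [AddCommMonoid E] [AddCommMonoid α] [PartialOrder α] [AddCommMonoid β] [PartialOrder β]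
    [SMul 𝕜 E] [SMul 𝕜 α] [SMul 𝕜 β] {s : Set E} {t : Set β} {f : E → β} {g : β → α}
    (hg : ConvexOn 𝕜 t g) (hf : ConcaveOn 𝕜 s f) (hg' : AntitoneOn g t) (hst : MapsTo f s t) :
    ConvexOn 𝕜 s (g ∘ f) :=
  ⟨hf.1, fun _ hx _ hy _ _ ha hb hab =>
    (hg' (hg.1 (hst hx) (hst hy) ha hb hab) (hst (hf.1 hx hy ha hb hab))
      (hf.2 hx hy ha hb hab)).trans (hg.2 (hst hx) (hst hy) ha hb hab)⟩

theorem exp_sub_one_pos {u : ℝ} (hu : 0 < u) : 0 < exp u - 1 :=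
  sub_pos.2 (one_lt_exp_iff.2 hu)

theorem exp_sub_one_le_mul_exp (u : ℝ) : exp u - 1 ≤ u * exp u := by
  have h := add_one_le_exp (-u)
  have : exp (-u) * exp u = 1 := by rw [← exp_add, neg_add_cancel, exp_zero]
  nlinarith [exp_pos u]

theorem two_mul_exp_sub_one_le {u : ℝ} (hu : 0 ≤ u) : 2 * (exp u - 1) ≤ u * (exp u + 1) := by
  let G : ℝ → ℝ := fun v => v * exp v + v - 2 * exp v + 2
  have hG : ∀ v, HasDerivAt G (v * exp v - exp v + 1) v := fun v => by
    have := ((((hasDerivAt_id' v).fun_mul (hasDerivAt_exp v)).fun_add (hasDerivAt_id' v)).fun_sub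
      ((hasDerivAt_exp v).const_mul 2)).add_const 2
    exact this.congr_deriv (by ring)
  have hmono : Monotone G := monotone_of_hasDerivAt_nonneg hG fun v => by
    simp only [Pi.zero_apply]
    linarith [exp_sub_one_le_mul_exp v]
  have := hmono hu
  simp only [G, zero_mul, exp_zero] at this
  linarith

noncomputable def divExpSubOne (u : ℝ) : ℝ := u / (exp u - 1)

theorem hasDerivAt_divExpSubOne {u : ℝ} (hu : 0 < u) :
    HasDerivAt divExpSubOne ((exp u - 1 - u * exp u) / (exp u - 1) ^ 2) u := by
  have hne : exp u - 1 ≠ 0 := (exp_sub_one_pos hu).ne'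
  exact ((hasDerivAt_id' u).fun_div ((hasDerivAt_exp u).sub_const 1) hne).congr_deriv (by ring)

theorem hasDerivAt_exp_sub_one_sub_mul_exp_div_sq {u : ℝ} (hu : 0 < u) :
    HasDerivAt (fun v => (exp v - 1 - v * exp v) / (exp v - 1) ^ 2)
      (exp u * (u * exp u + u - 2 * exp u + 2) / (exp u - 1) ^ 3) u := by
  have hne : exp u - 1 ≠ 0 := (exp_sub_one_pos hu).ne'
  have hnum := ((hasDerivAt_exp u).sub_const 1).fun_sub
    ((hasDerivAt_id' u).fun_mul (hasDerivAt_exp u))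
  have hden := ((hasDerivAt_exp u).sub_const 1).fun_pow 2
  refine (hnum.fun_div hden (pow_ne_zero 2 hne)).congr_deriv ?_
  field_simp
  ring

theorem antitoneOn_divExpSubOne : AntitoneOn divExpSubOne (Ioi 0) := by
  refine antitoneOn_of_hasDerivWithinAt_nonpos (convex_Ioi 0)
    (f' := fun u => (exp u - 1 - u * exp u) / (exp u - 1) ^ 2)
    (fun u hu => (hasDerivAt_divExpSubOne hu).continuousAt.continuousWithinAt) ?_ ?_
  all_goals rw [interior_Ioi]
  · exact fun u hu => (hasDerivAt_divExpSubOne hu).hasDerivWithinAt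
  · exact fun u _ => div_nonpos_of_nonpos_of_nonneg
      (by linarith [exp_sub_one_le_mul_exp u]) (sq_nonneg _)

theorem convexOn_divExpSubOne : ConvexOn ℝ (Ioi 0) divExpSubOne := by
  refine convexOn_of_hasDerivWithinAt2_nonneg (convex_Ioi 0)
    (f' := fun u => (exp u - 1 - u * exp u) / (exp u - 1) ^ 2)
    (f'' := fun u => exp u * (u * exp u + u - 2 * exp u + 2) / (exp u - 1) ^ 3)
    (fun u hu => (hasDerivAt_divExpSubOne hu).continuousAt.continuousWithinAt) ?_ ?_ ?_
  all_goals rw [interior_Ioi]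
  · exact fun u hu => (hasDerivAt_divExpSubOne hu).hasDerivWithinAt
  · exact fun u hu => (hasDerivAt_exp_sub_one_sub_mul_exp_div_sq hu).hasDerivWithinAt
  · intro u hu
    have := two_mul_exp_sub_one_le hu.le
    exact div_nonneg (mul_nonneg (exp_pos u).le (by linarith)) (pow_pos (exp_sub_one_pos hu) 3).le

section Rpow

variable {α : ℝ}

theorem convexOn_divExpSubOne_rpow (hα : 0 ≤ α) (hα1 : α ≤ 1) :
    ConvexOn ℝ (Ioi 0) fun z : ℝ => divExpSubOne (z ^ α) :=
  convexOn_divExpSubOne.comp_concaveOn_of_mapsTo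
    ((concaveOn_rpow hα hα1).subset Ioi_subset_Ici_self (convex_Ioi 0))
    antitoneOn_divExpSubOne fun _ hz => rpow_pos_of_pos hz α

theorem antitoneOn_divExpSubOne_rpow (hα : 0 ≤ α) :
    AntitoneOn (fun z : ℝ => divExpSubOne (z ^ α)) (Ioi 0) := fun _ hz _ hw hzw =>
  antitoneOn_divExpSubOne (rpow_pos_of_pos hz α) (rpow_pos_of_pos hw α)
    (rpow_le_rpow (le_of_lt hz) hzw hα)

theorem differentiableAt_divExpSubOne_rpow {z : ℝ} (hz : 0 < z) :
    DifferentiableAt ℝ (fun z : ℝ => divExpSubOne (z ^ α)) z := by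
  have h := (hasDerivAt_divExpSubOne (rpow_pos_of_pos hz α)).differentiableAt.comp z
    (hasDerivAt_rpow_const (p := α) (Or.inl hz.ne')).differentiableAt
  exact h

end Rpow

noncomputable def weibullCDF (α c t : ℝ) : ℝ := 1 - exp (-((c * t) ^ α))

noncomputable def weibullRevHazard (α c t : ℝ) : ℝ :=
  α * c ^ α * t ^ (α - 1) / (exp ((c * t) ^ α) - 1)

section Weibull

variable {α c t : ℝ}

theorem weibullRevHazard_eq (hc : 0 < c) (ht : 0 < t) :
    weibullRevHazard α c t = α / t * divExpSubOne ((c * t) ^ α) := by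
  rw [weibullRevHazard, divExpSubOne, mul_rpow hc.le ht.le, rpow_sub_one ht.ne']
  field_simp

theorem weibullCDF_pos (hc : 0 < c) (ht : 0 < t) : 0 < weibullCDF α c t := by
  rw [weibullCDF, sub_pos, exp_lt_one_iff, neg_lt_zero]
  exact rpow_pos_of_pos (mul_pos hc ht) α

theorem hasDerivAt_weibullCDF (hc : 0 < c) (ht : 0 < t) :
    HasDerivAt (weibullCDF α c) (weibullCDF α c t * weibullRevHazard α c t) t := by
  have hct : 0 < c * t := mul_pos hc ht
  have hE : exp ((c * t) ^ α) - 1 ≠ 0 :=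
    (exp_sub_one_pos (rpow_pos_of_pos hct α)).ne'
  have h := (((hasDerivAt_id' t).const_mul c).rpow_const (p := α)
    (Or.inl hct.ne')).fun_neg.exp.const_sub 1
  refine h.congr_deriv ?_
  rw [weibullCDF, weibullRevHazard, exp_neg, rpow_sub_one hct.ne', rpow_sub_one ht.ne']
  rw [mul_rpow hc.le ht.le] at hE ⊢
  field_simp

end Weibull

theorem HasDerivAt.fun_finsetProd_mul_sum {ι 𝕜 𝔸 : Type*} [NontriviallyNormedField 𝕜]
    [NormedCommRing 𝔸] [NormedAlgebra 𝕜 𝔸] {u : Finset ι} {f : ι → 𝕜 → 𝔸} {r : ι → 𝔸} {x : 𝕜}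
    (hf : ∀ i ∈ u, HasDerivAt (f i) (f i x * r i) x) :
    HasDerivAt (fun y => ∏ i ∈ u, f i y) ((∏ i ∈ u, f i x) * ∑ i ∈ u, r i) x := by
  classical
  refine (HasDerivAt.fun_finsetProd hf).congr_deriv ?_
  rw [Finset.mul_sum]
  refine Finset.sum_congr rfl fun i hi => ?_
  rw [smul_eq_mul, ← mul_assoc, Finset.prod_erase_mul _ _ hi]

theorem monotoneOn_div_of_hasDerivAt_mul {f g a b : ℝ → ℝ} {s : Set ℝ} (hs : Convex ℝ s)
    (hf : ∀ t ∈ s, HasDerivAt f (f t * a t) t) (hg : ∀ t ∈ s, HasDerivAt g (g t * b t) t)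
    (hf₀ : ∀ t ∈ s, 0 < f t) (hg₀ : ∀ t ∈ s, 0 ≤ g t) (hab : ∀ t ∈ s, a t ≤ b t) :
    MonotoneOn (fun t => g t / f t) s := by
  have hdiv : ∀ t ∈ s, HasDerivAt (fun t => g t / f t) (g t / f t * (b t - a t)) t :=
    fun t ht => ((hg t ht).fun_div (hf t ht) (hf₀ t ht).ne').congr_deriv <| by
      field_simp [(hf₀ t ht).ne']
  refine monotoneOn_of_hasDerivWithinAt_nonneg hs
    (fun t ht => (hdiv t ht).continuousAt.continuousWithinAt)
    (fun t ht => (hdiv t (interior_subset ht)).hasDerivWithinAt) fun t ht => ?_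
  replace ht := interior_subset ht
  exact mul_nonneg (div_nonneg (hg₀ t ht) (hf₀ t ht).le) (sub_nonneg.2 (hab t ht))

theorem WeaklyMajorizedBy.sum_weibullRevHazard_le {n : ℕ} {α : ℝ} (hα : 0 ≤ α) (hα1 : α ≤ 1)
    {lam θ : Fin n → ℝ} (hlam : ∀ i, 0 < lam i) (hθ : ∀ i, 0 < θ i)
    (h : WeaklyMajorizedBy lam θ) {t : ℝ} (ht : 0 < t) :
    ∑ i, weibullRevHazard α (lam i) t ≤ ∑ i, weibullRevHazard α (θ i) t := by
  have key := (h.mul_const ht.le).sum_le_sum_of_convexOn_of_antitoneOn isOpen_Ioi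
    (convexOn_divExpSubOne_rpow hα hα1) (antitoneOn_divExpSubOne_rpow hα)
    (fun _ hz => differentiableAt_divExpSubOne_rpow hz) (fun i => mul_pos (hlam i) ht)
    (fun i => mul_pos (hθ i) ht)
  simp only [weibullRevHazard_eq (hlam _) ht, weibullRevHazard_eq (hθ _) ht, ← Finset.mul_sum]
  exact mul_le_mul_of_nonneg_left key (div_nonneg hα ht.le)

/-- If `(λ₁,…,λₙ) ≼^w (θ₁,…,θₙ)` and `0 < α ≤ 1`, then for every `t > 0` the reverse
hazard rate of the parallel Weibull system with scale parameters `λ` is at most that of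
the system with scale parameters `θ`; equivalently, the ratio of the distribution
functions is increasing in `t` on `(0, ∞)`, i.e. `X_{n:n}^λ ≤_rh X_{n:n}^θ`. -/
theorem parallel_weibull_rh_order_weak_majorization
    {n : ℕ} (α : ℝ) (hα : 0 < α) (hα1 : α ≤ 1)
    (lam θ : Fin n → ℝ) (hlam : ∀ i, 0 < lam i) (hθ : ∀ i, 0 < θ i)
    (hmaj : WeaklyMajorizedBy lam θ) :
    (∀ t : ℝ, 0 < t →
      ∑ i, α * lam i ^ α * t ^ (α - 1) / (exp ((lam i * t) ^ α) - 1) ≤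
        ∑ i, α * θ i ^ α * t ^ (α - 1) / (exp ((θ i * t) ^ α) - 1)) ∧
    MonotoneOn
      (fun t : ℝ =>
        (∏ i, (1 - exp (-((θ i * t) ^ α)))) / ∏ i, (1 - exp (-((lam i * t) ^ α))))
      (Ioi (0 : ℝ)) := by
  have hrevHazard : ∀ t : ℝ, 0 < t →
      ∑ i, weibullRevHazard α (lam i) t ≤ ∑ i, weibullRevHazard α (θ i) t :=
    fun t ht => hmaj.sum_weibullRevHazard_le hα.le hα1 hlam hθ ht
  have hCDF : ∀ Z : Fin n → ℝ, (∀ i, 0 < Z i) → ∀ t ∈ Ioi (0 : ℝ),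
      HasDerivAt (fun t => ∏ i, weibullCDF α (Z i) t)
        ((∏ i, weibullCDF α (Z i) t) * ∑ i, weibullRevHazard α (Z i) t) t :=
    fun Z hZ t ht => HasDerivAt.fun_finsetProd_mul_sum fun i _ => hasDerivAt_weibullCDF (hZ i) ht
  exact ⟨hrevHazard, monotoneOn_div_of_hasDerivAt_mul (convex_Ioi 0) (hCDF lam hlam) (hCDF θ hθ)
    (fun t ht => Finset.prod_pos fun i _ => weibullCDF_pos (hlam i) ht)
    (fun t ht => Finset.prod_nonneg fun i _ => (weibullCDF_pos (hθ i) ht).le) hrevHazard⟩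
end

section
/- Fix a real α > 0, positive integers p, q with p + q = n, and positive reals λ, λ₁, λ₁* such that λ₁* = min(λ, λ₁, λ₁*) and (λ₁, λ) is weakly majorized by (λ₁*, λ) (so that either λ₁* ≤ λ ≤ λ₁ or λ₁* ≤ λ₁ ≤ λ). Then the ratio of reverse hazard rates of the two multiple-outlier parallel systems, r_{n:n}*(t) / r_{n:n}(t) = [p·u(λ₁* t) + q·u(λ t)] / [p·u(λ₁ t) + q·u(λ t)], where u(s) = s^α / (e^{s^α} − 1), is increasing in t on (0, ∞). -/
open Real Set

/-!
Write `g x = x / (eˣ - 1)`, so that `u(s) = g (sᵅ)`; after substituting `τ = tᵅ` the ratio is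
`(p g(Aτ) + q g(Lτ)) / (p g(Bτ) + q g(Lτ))` with `A = λ₁*ᵅ ≤ B = λ₁ᵅ` and `A ≤ L = λᵅ`.
The key fact is that `g(cτ)` is log-submodular in `(c, τ)`: `g(cs) g(dt) ≤ g(ct) g(ds)` for
`c ≤ d`, `s ≤ t`. After cancelling `cs·dt = ct·ds` this says that
`c ↦ log(e^{cs} - 1) - log(e^{ct} - 1)` decreases, and its derivative is `(k(cs) - k(ct)) / c`
for the increasing function `k x = x eˣ / (eˣ - 1) = g(-x)`.
Cross-multiplied, monotonicity of the ratio follows from this inequality for the pairs `(A, B)`,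
`(A, L)` and, according to the order of `B` and `L`, either `(L, B)` or `(B, L)` together with
`g(Bt) ≤ g(At)`.
-/

noncomputable def xDivExpSubOne (x : ℝ) : ℝ := x / (exp x - 1)

local notation "g" => xDivExpSubOne

lemma exp_sub_one_pos_s13 {x : ℝ} (hx : 0 < x) : 0 < exp x - 1 :=
  sub_pos.2 (one_lt_exp_iff.2 hx)

lemma xDivExpSubOne_pos {x : ℝ} (hx : 0 < x) : 0 < g x :=
  div_pos hx (exp_sub_one_pos_s13 hx)

lemma exp_sub_one_div_pos {x : ℝ} (hx : x ≠ 0) : 0 < (exp x - 1) / x := by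
  rcases hx.lt_or_gt with hx | hx
  · exact div_pos_of_neg_of_neg (sub_neg.2 (exp_lt_one_iff.2 hx)) hx
  · exact div_pos (exp_sub_one_pos_s13 hx) hx

/-- `1 / g` is the slope of the convex function `exp` at `0`. -/
lemma xDivExpSubOne_le_of_le {x y : ℝ} (hx : x ≠ 0) (hy : y ≠ 0) (hxy : x ≤ y) :
    g y ≤ g x := by
  have hslope := convexOn_exp.secant_mono (mem_univ 0) (mem_univ x) (mem_univ y) hx hy hxy
  simp only [exp_zero, sub_zero] at hslope
  simpa only [xDivExpSubOne, inv_div] using inv_anti₀ (exp_sub_one_div_pos hx) hslope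

lemma mul_exp_div_exp_sub_one {x : ℝ} (hx : x ≠ 0) : x * (exp x / (exp x - 1)) = g (-x) := by
  have h₁ : exp x - 1 ≠ 0 := sub_ne_zero.2 ((exp_eq_one_iff x).not.2 hx)
  have h₂ : 1 - exp x ≠ 0 := sub_ne_zero.2 (Ne.symm ((exp_eq_one_iff x).not.2 hx))
  rw [xDivExpSubOne, exp_neg]
  field_simp
  ring

/-- Convexity of `f ∘ exp`, in the form of decreasing differences. -/
lemma antitoneOn_comp_mul_sub_comp_mul {f f' : ℝ → ℝ} (hf : ∀ x > 0, HasDerivAt f (f' x) x)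
    (hf' : MonotoneOn (fun x => x * f' x) (Ioi 0)) {s t : ℝ} (hs : 0 < s) (hst : s ≤ t) :
    AntitoneOn (fun c => f (c * s) - f (c * t)) (Ioi 0) := by
  have ht : 0 < t := hs.trans_le hst
  have hderiv : ∀ c ∈ Ioi (0 : ℝ), HasDerivAt (fun c => f (c * s) - f (c * t))
      (f' (c * s) * s - f' (c * t) * t) c := fun c hc =>
    ((hf _ (mul_pos hc hs)).comp c (hasDerivAt_mul_const s)).sub
      ((hf _ (mul_pos hc ht)).comp c (hasDerivAt_mul_const t))
  refine antitoneOn_of_hasDerivWithinAt_nonpos (convex_Ioi 0)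
    (f' := fun c => f' (c * s) * s - f' (c * t) * t)
    (fun c hc => (hderiv c hc).continuousAt.continuousWithinAt) ?_ ?_
  · rw [interior_Ioi]
    exact fun c hc => (hderiv c hc).hasDerivWithinAt
  · rw [interior_Ioi]
    intro c hc
    have hmono : c * s * f' (c * s) ≤ c * t * f' (c * t) :=
      hf' (mul_pos hc hs) (mul_pos hc ht) (mul_le_mul_of_nonneg_left hst hc.le)
    have : c * (f' (c * s) * s - f' (c * t) * t) ≤ c * 0 := by linarith
    exact le_of_mul_le_mul_left this hc

lemma exp_sub_one_mul_le_mul {c d s t : ℝ} (hc : 0 < c) (hcd : c ≤ d) (hs : 0 < s)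
    (hst : s ≤ t) :
    (exp (c * t) - 1) * (exp (d * s) - 1) ≤ (exp (c * s) - 1) * (exp (d * t) - 1) := by
  have hderiv : ∀ x > 0, HasDerivAt (fun x => log (exp x - 1)) (exp x / (exp x - 1)) x :=
    fun x hx => ((hasDerivAt_exp x).sub_const 1).log (exp_sub_one_pos_s13 hx).ne'
  have hk : MonotoneOn (fun x => x * (exp x / (exp x - 1))) (Ioi 0) := by
    intro x hx y hy hxy
    have hx₀ : x ≠ 0 := (mem_Ioi.1 hx).ne'
    have hy₀ : y ≠ 0 := (mem_Ioi.1 hy).ne'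
    simp only [mul_exp_div_exp_sub_one hx₀, mul_exp_div_exp_sub_one hy₀]
    exact xDivExpSubOne_le_of_le (neg_ne_zero.2 hy₀) (neg_ne_zero.2 hx₀) (neg_le_neg hxy)
  have hd : 0 < d := hc.trans_le hcd
  have ht : 0 < t := hs.trans_le hst
  have hcs := exp_sub_one_pos_s13 (mul_pos hc hs)
  have hct := exp_sub_one_pos_s13 (mul_pos hc ht)
  have hds := exp_sub_one_pos_s13 (mul_pos hd hs)
  have hdt := exp_sub_one_pos_s13 (mul_pos hd ht)
  have hlog := antitoneOn_comp_mul_sub_comp_mul hderiv hk hs hst hc hd hcd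
  dsimp only at hlog
  rw [← log_le_log_iff (mul_pos hct hds) (mul_pos hcs hdt), log_mul hct.ne' hds.ne',
    log_mul hcs.ne' hdt.ne']
  linarith

lemma xDivExpSubOne_mul_le_mul {c d s t : ℝ} (hc : 0 < c) (hcd : c ≤ d) (hs : 0 < s)
    (hst : s ≤ t) : g (c * s) * g (d * t) ≤ g (c * t) * g (d * s) := by
  have hd : 0 < d := hc.trans_le hcd
  have ht : 0 < t := hs.trans_le hst
  unfold xDivExpSubOne
  rw [div_mul_div_comm, div_mul_div_comm, show c * s * (d * t) = c * t * (d * s) by ring]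
  exact div_le_div_of_nonneg_left (by positivity)
    (mul_pos (exp_sub_one_pos_s13 (mul_pos hc ht)) (exp_sub_one_pos_s13 (mul_pos hd hs)))
    (exp_sub_one_mul_le_mul hc hcd hs hst)

lemma xDivExpSubOne_cross_add_le {A B L s t : ℝ} (hA : 0 < A) (hAB : A ≤ B) (hAL : A ≤ L)
    (hs : 0 < s) (hst : s ≤ t) :
    g (A * s) * g (L * t) + g (L * s) * g (B * t) ≤
      g (A * t) * g (L * s) + g (L * t) * g (B * s) := by
  have ht : 0 < t := hs.trans_le hst
  rcases le_total L B with hLB | hBL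
  · linarith [xDivExpSubOne_mul_le_mul hA hAL hs hst,
      xDivExpSubOne_mul_le_mul (hA.trans_le hAL) hLB hs hst]
  · have hB : 0 < B := hA.trans_le hAB
    have hBt : 0 < g (B * t) := xDivExpSubOne_pos (mul_pos hB ht)
    have hAB_t : g (B * t) ≤ g (A * t) :=
      xDivExpSubOne_le_of_le (mul_pos hA ht).ne' (mul_pos hB ht).ne'
        (mul_le_mul_of_nonneg_right hAB ht.le)
    -- multiply by `g (B t)`, then use the pairs `(A, B)` and `(B, L)`
    refine le_of_mul_le_mul_right ?_ hBt
    nlinarith [mul_le_mul_of_nonneg_left (xDivExpSubOne_mul_le_mul hA hAB hs hst)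
        (xDivExpSubOne_pos (mul_pos (hA.trans_le hAL) ht)).le,
      mul_le_mul_of_nonneg_right (xDivExpSubOne_mul_le_mul hB hBL hs hst)
        (sub_nonneg.2 hAB_t)]

theorem monotoneOn_xDivExpSubOne_mixture_ratio {A B L p q : ℝ} (hA : 0 < A) (hAB : A ≤ B)
    (hAL : A ≤ L) (hp : 0 < p) (hq : 0 ≤ q) :
    MonotoneOn (fun τ => (p * g (A * τ) + q * g (L * τ)) / (p * g (B * τ) + q * g (L * τ)))
      (Ioi 0) := by
  intro s hs t ht hst
  have hden : ∀ τ ∈ Ioi (0 : ℝ), 0 < p * g (B * τ) + q * g (L * τ) := fun τ hτ =>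
    add_pos_of_pos_of_nonneg (mul_pos hp (xDivExpSubOne_pos (mul_pos (hA.trans_le hAB) hτ)))
      (mul_nonneg hq (xDivExpSubOne_pos (mul_pos (hA.trans_le hAL) hτ)).le)
  dsimp only
  rw [div_le_div_iff₀ (hden s hs) (hden t ht)]
  nlinarith [mul_le_mul_of_nonneg_left (xDivExpSubOne_mul_le_mul hA hAB hs hst)
      (mul_nonneg hp.le hp.le),
    mul_le_mul_of_nonneg_left (xDivExpSubOne_cross_add_le hA hAB hAL hs hst)
      (mul_nonneg hp.le hq)]

theorem multiple_outlier_weibull_rhr_ratio_monotone_weak_maj_general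
    (α lam lam₁ lam₁s : ℝ) (hα : 0 < α)
    (hlam₁s : 0 < lam₁s)
    (p q : ℕ) (hp : 0 < p)
    (hmin : lam₁s = min lam (min lam₁ lam₁s)) :
    MonotoneOn
      (fun t : ℝ =>
        ((p : ℝ) * ((lam₁s * t) ^ α / (exp ((lam₁s * t) ^ α) - 1)) +
            (q : ℝ) * ((lam * t) ^ α / (exp ((lam * t) ^ α) - 1))) /
          ((p : ℝ) * ((lam₁ * t) ^ α / (exp ((lam₁ * t) ^ α) - 1)) +
            (q : ℝ) * ((lam * t) ^ α / (exp ((lam * t) ^ α) - 1))))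
      (Ioi (0 : ℝ)) := by
  have hsl : lam₁s ≤ lam := hmin ▸ min_le_left _ _
  have hs1 : lam₁s ≤ lam₁ := hmin ▸ (min_le_right _ _).trans (min_le_left _ _)
  have hratio := monotoneOn_xDivExpSubOne_mixture_ratio (rpow_pos_of_pos hlam₁s α)
    (rpow_le_rpow hlam₁s.le hs1 hα.le) (rpow_le_rpow hlam₁s.le hsl hα.le)
    (Nat.cast_pos.2 hp) (Nat.cast_nonneg q)
  refine (hratio.comp ((monotoneOn_rpow_Ici_of_exponent_nonneg hα.le).mono Ioi_subset_Ici_self)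
    fun t ht => rpow_pos_of_pos ht α).congr fun t ht => ?_
  simp only [Function.comp, xDivExpSubOne, mul_rpow hlam₁s.le (le_of_lt ht),
    mul_rpow (hlam₁s.le.trans hsl) (le_of_lt ht), mul_rpow (hlam₁s.le.trans hs1) (le_of_lt ht)]

/-- For any `α > 0` and `p + q = n` with `p, q ≥ 1`, if `λ₁* = min(λ, λ₁, λ₁*)` and
`(λ₁, λ) ≼^w (λ₁*, λ)` (i.e. `min(λ₁, λ) ≥ min(λ₁*, λ)` and `λ₁ + λ ≥ λ₁* + λ`), then
the ratio of reverse hazard rates of the multiple-outlier parallel Weibull systems,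
`r_{n:n}*(t) / r_{n:n}(t) = [p·u(λ₁* t) + q·u(λ t)] / [p·u(λ₁ t) + q·u(λ t)]` with
`u(s) = s^α / (e^{s^α} − 1)`, is increasing in `t` on `(0, ∞)`. -/
theorem multiple_outlier_weibull_rhr_ratio_monotone_weak_maj
    (α lam lam₁ lam₁s : ℝ) (hα : 0 < α)
    (hlam : 0 < lam) (hlam₁ : 0 < lam₁) (hlam₁s : 0 < lam₁s)
    (p q n : ℕ) (hp : 0 < p) (hq : 0 < q) (hn : p + q = n)
    (hmin : lam₁s = min lam (min lam₁ lam₁s))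
    (hwmaj : min lam₁s lam ≤ min lam₁ lam ∧ lam₁s + lam ≤ lam₁ + lam) :
    MonotoneOn
      (fun t : ℝ =>
        ((p : ℝ) * ((lam₁s * t) ^ α / (exp ((lam₁s * t) ^ α) - 1)) +
            (q : ℝ) * ((lam * t) ^ α / (exp ((lam * t) ^ α) - 1))) /
          ((p : ℝ) * ((lam₁ * t) ^ α / (exp ((lam₁ * t) ^ α) - 1)) +
            (q : ℝ) * ((lam * t) ^ α / (exp ((lam * t) ^ α) - 1))))
      (Ioi (0 : ℝ)) :=
  multiple_outlier_weibull_rhr_ratio_monotone_weak_maj_general α lam lam₁ lam₁s hα hlam₁s p q hp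
    hmin
end

section
/- Fix a real α > 0, positive integers p, q with p + q = n, and positive reals λ, λ₁, λ₁* such that λ₁* = min(λ, λ₁, λ₁*) and (λ₁, λ) is weakly majorized by (λ₁*, λ) (so that either λ₁* ≤ λ ≤ λ₁ or λ₁* ≤ λ₁ ≤ λ). Then the lifetime of the multiple-outlier parallel system with p components of scale λ₁ and q components of scale λ is smaller in the likelihood ratio order than the one with p components of scale λ₁* and q components of scale λ; that is, the ratio of densities f_{n:n}*(t) / f_{n:n}(t) is increasing in t on (0, ∞). -/
open Real Set

/-! Substituting `x = t ^ α` and cancelling the factor `(1 - e^{-(λ t)^α})^q α / t` common to both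
densities reduces the claim to the exponential case `α = 1`, with scales `A = λ₁*^α ≤ B = λ₁^α`
and `A ≤ C = λ^α`. There `x · (log f)'` of the reduced density `f = (1 - e^{-Ax})^p S_A` is
`1 + p u(Ax) - W_A`, where `S_A = p u(Ax) + q u(Cx)` and `W_A` is the mean of `m(Ax)` and `m(Cx)`
weighted by `p u(Ax)` and `q u(Cx)`, with `m(y) = y + u(y) = y / (1 - e^{-y})`. Since `u` decreases
and `m` increases (both are inverse secant slopes of the convex function `exp`), passing from `A`
to `B` lowers `p u` and raises the weighted mean, so the log-derivative of the ratio is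
nonnegative. -/

theorem monotoneOn_div_of_hasDerivAt {f g f' g' : ℝ → ℝ} {s : Set ℝ} (hs : Convex ℝ s)
    (hf : ∀ x ∈ s, HasDerivAt f (f' x) x) (hg : ∀ x ∈ s, HasDerivAt g (g' x) x)
    (hg₀ : ∀ x ∈ s, g x ≠ 0) (h : ∀ x ∈ s, f x * g' x ≤ f' x * g x) :
    MonotoneOn (fun x => f x / g x) s := by
  have hdiv : ∀ x ∈ s, HasDerivAt (fun x => f x / g x)
      ((f' x * g x - f x * g' x) / g x ^ 2) x :=
    fun x hx => (hf x hx).div (hg x hx) (hg₀ x hx)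
  refine monotoneOn_of_hasDerivWithinAt_nonneg hs
    (fun x hx => (hdiv x hx).continuousAt.continuousWithinAt)
    (fun x hx => (hdiv x (interior_subset hx)).hasDerivWithinAt) fun x hx => ?_
  exact div_nonneg (sub_nonneg.2 (h x (interior_subset hx))) (sq_nonneg _)

/-- `x f'(x)` is invariant under rescaling `x ↦ L x`. -/
theorem HasDerivAt.comp_const_mul_div {f : ℝ → ℝ} {d L x : ℝ} (hL : L ≠ 0)
    (hf : HasDerivAt f (d / (L * x)) (L * x)) : HasDerivAt (fun x => f (L * x)) (d / x) x := by
  refine (hf.comp x ((hasDerivAt_id x).const_mul L)).congr_deriv ?_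
  field_simp

/-- The mean of `mA, mC` with weights `P a, Q c` is at most the mean of `mB, mC` with weights
`P b, Q c`, in cross-multiplied form. -/
theorem weighted_mean_le {P Q a b c mA mB mC : ℝ} (hP : 0 ≤ P) (hQ : 0 ≤ Q) (hb : 0 ≤ b)
    (hba : b ≤ a) (hc : 0 ≤ c) (hAB : mA ≤ mB) (hAC : mA ≤ mC) :
    (P * a * mA + Q * c * mC) * (P * b + Q * c) ≤ (P * b * mB + Q * c * mC) * (P * a + Q * c) := by
  have ha : 0 ≤ a := hb.trans hba
  have := sub_nonneg.2 hba
  have := sub_nonneg.2 hAB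
  have := sub_nonneg.2 hAC
  have hdiff : (P * b * mB + Q * c * mC) * (P * a + Q * c)
      - (P * a * mA + Q * c * mC) * (P * b + Q * c)
      = P ^ 2 * a * b * (mB - mA) + P * Q * c * ((a - b) * (mC - mA) + b * (mB - mA)) := by
    ring
  have : 0 ≤ P ^ 2 * a * b * (mB - mA) + P * Q * c * ((a - b) * (mC - mA) + b * (mB - mA)) := by
    positivity
  linarith

theorem one_sub_exp_neg_pos {y : ℝ} (hy : 0 < y) : 0 < 1 - exp (-y) :=
  sub_pos.2 (exp_lt_one_iff.2 (neg_lt_zero.2 hy))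

namespace WeibullParallel

noncomputable def u (y : ℝ) : ℝ := y / (exp y - 1)

noncomputable def m (y : ℝ) : ℝ := y + u y

theorem u_eq_inv_slope (y : ℝ) : u y = (slope exp 0 y)⁻¹ := by
  rw [u, slope_def_field, exp_zero, sub_zero, inv_div]

theorem m_eq_inv_slope {y : ℝ} (hy : y ≠ 0) : m y = (slope exp 0 (-y))⁻¹ := by
  have he : exp y - 1 ≠ 0 := by simpa [sub_eq_zero] using hy
  have he' : 1 - exp y ≠ 0 := fun h => he (by linarith)
  rw [m, u, slope_def_field, exp_zero, sub_zero, inv_div, exp_neg]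
  field_simp
  ring

theorem slope_exp_pos {y : ℝ} (hy : y ≠ 0) : 0 < slope exp 0 y := by
  rw [slope_def_field, sub_zero]
  rcases hy.lt_or_gt with h | h
  · exact div_pos_of_neg_of_neg (sub_neg.2 (exp_lt_exp.2 h)) h
  · exact div_pos (sub_pos.2 (exp_lt_exp.2 h)) h

theorem antitoneOn_u : AntitoneOn u (Ioi 0) := by
  intro s hs t ht hst
  simp only [u_eq_inv_slope]
  exact inv_anti₀ (slope_exp_pos (ne_of_gt hs))
    (convexOn_exp.slope_mono (mem_univ 0) ⟨mem_univ s, ne_of_gt hs⟩ ⟨mem_univ t, ne_of_gt ht⟩ hst)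

theorem monotoneOn_m : MonotoneOn m (Ioi 0) := by
  intro s hs t ht hst
  rw [m_eq_inv_slope (ne_of_gt hs), m_eq_inv_slope (ne_of_gt ht)]
  exact inv_anti₀ (slope_exp_pos (neg_ne_zero.2 (ne_of_gt ht)))
    (convexOn_exp.slope_mono (mem_univ 0) ⟨mem_univ _, neg_ne_zero.2 (ne_of_gt ht)⟩
      ⟨mem_univ _, neg_ne_zero.2 (ne_of_gt hs)⟩ (neg_le_neg hst))

theorem u_pos {y : ℝ} (hy : 0 < y) : 0 < u y :=
  div_pos hy (sub_pos.2 (one_lt_exp_iff.2 hy))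

theorem hasDerivAt_u {y : ℝ} (hy : y ≠ 0) : HasDerivAt u (u y * (1 - m y) / y) y := by
  have he : exp y - 1 ≠ 0 := by simpa [sub_eq_zero] using hy
  refine ((hasDerivAt_id y).div ((hasDerivAt_exp y).sub_const 1) he).congr_deriv ?_
  simp only [m, u, id]
  field_simp
  ring

theorem hasDerivAt_one_sub_exp_neg {y : ℝ} (hy : y ≠ 0) :
    HasDerivAt (fun y => 1 - exp (-y)) ((1 - exp (-y)) * u y / y) y := by
  have he : exp y - 1 ≠ 0 := by simpa [sub_eq_zero] using hy
  refine ((hasDerivAt_neg y).exp.const_sub 1).congr_deriv ?_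
  simp only [u, exp_neg]
  field_simp

/-- The density of the parallel system at time `t`, written in `x = t ^ α` with `A = λ₁ ^ α` and
`C = λ ^ α`, without the factor `(1 - e^{-Cx}) ^ q α / t` that does not depend on `λ₁`. -/
noncomputable def reducedDensity (p q : ℕ) (A C x : ℝ) : ℝ :=
  (1 - exp (-(A * x))) ^ p * (p * u (A * x) + q * u (C * x))

variable {p q : ℕ} {A C x : ℝ}

theorem reducedDensity_pos (hpq : 0 < p + q) (hA : 0 < A) (hC : 0 < C) (hx : 0 < x) :
    0 < reducedDensity p q A C x := by
  have := one_sub_exp_neg_pos (mul_pos hA hx)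
  have := u_pos (mul_pos hA hx)
  have := u_pos (mul_pos hC hx)
  rcases p.eq_zero_or_pos with rfl | hp
  · have : 0 < q := by omega
    simp only [reducedDensity]
    positivity
  · simp only [reducedDensity]
    positivity

theorem hasDerivAt_reducedDensity (hA : A ≠ 0) (hC : C ≠ 0) (hx : x ≠ 0) :
    HasDerivAt (reducedDensity p q A C)
      ((1 - exp (-(A * x))) ^ p * ((p * u (A * x) + q * u (C * x)) * (1 + p * u (A * x))
        - (p * u (A * x) * m (A * x) + q * u (C * x) * m (C * x))) / x) x := by
  have hF := (hasDerivAt_one_sub_exp_neg (mul_ne_zero hA hx)).comp_const_mul_div hA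
  have huA := (hasDerivAt_u (mul_ne_zero hA hx)).comp_const_mul_div hA
  have huC := (hasDerivAt_u (mul_ne_zero hC hx)).comp_const_mul_div hC
  refine ((hF.pow p).mul ((huA.const_mul (p : ℝ)).add (huC.const_mul (q : ℝ)))).congr_deriv ?_
  simp only [Pi.add_apply, Pi.pow_apply]
  rcases p with _ | p
  · simp only [CharP.cast_eq_zero, zero_tsub, pow_zero, mul_one, zero_mul, zero_add, one_mul,
      add_zero]
    ring
  · simp only [Nat.add_sub_cancel]
    push_cast
    ring

theorem monotoneOn_reducedDensity_div {B : ℝ} (hA : 0 < A) (hAB : A ≤ B) (hAC : A ≤ C) :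
    MonotoneOn (fun x => reducedDensity p q A C x / reducedDensity p q B C x) (Ioi 0) := by
  rcases (p + q).eq_zero_or_pos with hpq | hpq
  · obtain ⟨rfl, rfl⟩ : p = 0 ∧ q = 0 := by omega
    simpa [reducedDensity] using monotoneOn_const
  have hB := hA.trans_le hAB
  have hC := hA.trans_le hAC
  refine monotoneOn_div_of_hasDerivAt (convex_Ioi 0)
    (fun x hx => hasDerivAt_reducedDensity hA.ne' hC.ne' (ne_of_gt hx))
    (fun x hx => hasDerivAt_reducedDensity hB.ne' hC.ne' (ne_of_gt hx))
    (fun x hx => (reducedDensity_pos hpq hB hC hx).ne') fun x (hx : 0 < x) => ?_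
  have hAx : A * x ∈ Ioi 0 := mul_pos hA hx
  have hBx : B * x ∈ Ioi 0 := mul_pos hB hx
  have hCx : C * x ∈ Ioi 0 := mul_pos hC hx
  have hAxB : A * x ≤ B * x := mul_le_mul_of_nonneg_right hAB hx.le
  have hAxC : A * x ≤ C * x := mul_le_mul_of_nonneg_right hAC hx.le
  have hba : u (B * x) ≤ u (A * x) := antitoneOn_u hAx hBx hAxB
  have hmean := weighted_mean_le (P := p) (Q := q) (Nat.cast_nonneg _) (Nat.cast_nonneg _)
    (u_pos hBx).le hba (u_pos hCx).le (monotoneOn_m hAx hBx hAxB) (monotoneOn_m hAx hCx hAxC)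
  have := one_sub_exp_neg_pos hAx
  have := one_sub_exp_neg_pos hBx
  have := u_pos hAx
  have := u_pos hBx
  have := u_pos hCx
  have := sub_nonneg.2 hba
  have := sub_nonneg.2 hmean
  rw [← sub_nonneg]
  set a := u (A * x)
  set b := u (B * x)
  set c := u (C * x)
  calc 0 ≤ (1 - exp (-(A * x))) ^ p * (1 - exp (-(B * x))) ^ p / x *
        (p * (a - b) * (p * a + q * c) * (p * b + q * c)
          + ((p * b * m (B * x) + q * c * m (C * x)) * (p * a + q * c)
            - (p * a * m (A * x) + q * c * m (C * x)) * (p * b + q * c))) := by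
        positivity
    _ = _ := by
        simp only [reducedDensity]
        ring

end WeibullParallel

theorem multiple_outlier_weibull_lr_order_weak_maj_general
    (α lam lam₁ lam₁s : ℝ) (hα : 0 < α)
    (hlam : 0 < lam) (hlam₁ : 0 < lam₁) (hlam₁s : 0 < lam₁s)
    (p q : ℕ)
    (hmin : lam₁s = min lam (min lam₁ lam₁s)) :
    MonotoneOn
      (fun t : ℝ =>
        ((1 - exp (-((lam₁s * t) ^ α))) ^ p * (1 - exp (-((lam * t) ^ α))) ^ q *
            ((α / t) *
              ((p : ℝ) * ((lam₁s * t) ^ α / (exp ((lam₁s * t) ^ α) - 1)) +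
                (q : ℝ) * ((lam * t) ^ α / (exp ((lam * t) ^ α) - 1))))) /
          ((1 - exp (-((lam₁ * t) ^ α))) ^ p * (1 - exp (-((lam * t) ^ α))) ^ q *
            ((α / t) *
              ((p : ℝ) * ((lam₁ * t) ^ α / (exp ((lam₁ * t) ^ α) - 1)) +
                (q : ℝ) * ((lam * t) ^ α / (exp ((lam * t) ^ α) - 1))))))
      (Ioi (0 : ℝ)) := by
  obtain ⟨hle, hle₁, -⟩ : lam₁s ≤ lam ∧ lam₁s ≤ lam₁ ∧ lam₁s ≤ lam₁s := by
    simpa only [le_min_iff] using hmin.le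
  have hreduced := (WeibullParallel.monotoneOn_reducedDensity_div (p := p) (q := q)
    (rpow_pos_of_pos hlam₁s α) (rpow_le_rpow hlam₁s.le hle₁ hα.le)
    (rpow_le_rpow hlam₁s.le hle hα.le)).comp
    ((monotoneOn_rpow_Ici_of_exponent_nonneg hα.le).mono Ioi_subset_Ici_self)
    (fun t ht => rpow_pos_of_pos ht α)
  refine hreduced.congr fun t (ht : 0 < t) => ?_
  simp only [Function.comp, WeibullParallel.reducedDensity, WeibullParallel.u,
    mul_rpow hlam₁s.le ht.le, mul_rpow hlam₁.le ht.le, mul_rpow hlam.le ht.le]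
  have hcommon : (1 - exp (-(lam ^ α * t ^ α))) ^ q * (α / t) ≠ 0 := by
    have := one_sub_exp_neg_pos (by positivity : 0 < lam ^ α * t ^ α)
    positivity
  rw [← mul_div_mul_left _ _ hcommon]
  congr 1 <;> ring

/-- For any `α > 0` and `p + q = n` with `p, q ≥ 1`, if `λ₁* = min(λ, λ₁, λ₁*)` and
`(λ₁, λ) ≼^w (λ₁*, λ)` (i.e. `min(λ₁, λ) ≥ min(λ₁*, λ)` and `λ₁ + λ ≥ λ₁* + λ`), then
`X_{n:n} ≤_lr Y_{n:n}`: the ratio of densities `f_{n:n}*(t) / f_{n:n}(t)` of the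
multiple-outlier parallel Weibull systems, where the density for parameters `(a, b)` is
`(1 − e^{−(a t)^α})^p (1 − e^{−(b t)^α})^q · (α/t) · [p·u(a t) + q·u(b t)]` with
`u(s) = s^α / (e^{s^α} − 1)`, is increasing in `t` on `(0, ∞)`. -/
theorem multiple_outlier_weibull_lr_order_weak_maj
    (α lam lam₁ lam₁s : ℝ) (hα : 0 < α)
    (hlam : 0 < lam) (hlam₁ : 0 < lam₁) (hlam₁s : 0 < lam₁s)
    (p q n : ℕ) (hp : 0 < p) (hq : 0 < q) (hn : p + q = n)
    (hmin : lam₁s = min lam (min lam₁ lam₁s))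
    (hwmaj : min lam₁s lam ≤ min lam₁ lam ∧ lam₁s + lam ≤ lam₁ + lam) :
    MonotoneOn
      (fun t : ℝ =>
        ((1 - exp (-((lam₁s * t) ^ α))) ^ p * (1 - exp (-((lam * t) ^ α))) ^ q *
            ((α / t) *
              ((p : ℝ) * ((lam₁s * t) ^ α / (exp ((lam₁s * t) ^ α) - 1)) +
                (q : ℝ) * ((lam * t) ^ α / (exp ((lam * t) ^ α) - 1))))) /
          ((1 - exp (-((lam₁ * t) ^ α))) ^ p * (1 - exp (-((lam * t) ^ α))) ^ q *
            ((α / t) *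
              ((p : ℝ) * ((lam₁ * t) ^ α / (exp ((lam₁ * t) ^ α) - 1)) +
                (q : ℝ) * ((lam * t) ^ α / (exp ((lam * t) ^ α) - 1))))))
      (Ioi (0 : ℝ)) :=
  multiple_outlier_weibull_lr_order_weak_maj_general α lam lam₁ lam₁s hα hlam hlam₁ hlam₁s p q hmin
end

section
/- The function M₂(t) = −1 + e^t·(1 − t·(3 − 2e^t + t)) is nonnegative for all t ≥ 0; consequently, M₁(t) = −1 + e^{2t}(t − 1) − t(3 + t) + e^t(2 − 2t(t − 1)) is nonnegative for all t ≥ 0. -/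
/-!
Both inequalities come from the same principle: a function vanishing at `0` whose derivative
is nonnegative on `[0, ∞)` is nonnegative there. For `M₂` the derivative is
`e^t (−2 − t(5 + t) + e^t (2 + 4t))`, and `e^t ≥ 1 + t` bounds the bracket below by
`t + 3t² ≥ 0`. For `M₁` apply the principle twice: `M₁(0) = M₁'(0) = 0` and `M₁'' = 2 M₂`.
-/

open Real

theorem nonneg_of_hasDerivAt_of_deriv_nonneg {f f' : ℝ → ℝ}
    (hf : ∀ x, 0 ≤ x → HasDerivAt f (f' x) x) (h₀ : f 0 = 0) (hf' : ∀ x, 0 ≤ x → 0 ≤ f' x)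
    {t : ℝ} (ht : 0 ≤ t) : 0 ≤ f t := by
  have hmono : MonotoneOn f (Set.Ici 0) :=
    monotoneOn_of_hasDerivWithinAt_nonneg (convex_Ici 0)
      (fun x hx => (hf x hx).continuousAt.continuousWithinAt)
      (fun x hx => (hf x (interior_subset hx)).hasDerivWithinAt)
      (fun x hx => hf' x (interior_subset hx))
  simpa [h₀] using hmono Set.self_mem_Ici ht ht

noncomputable def M₂ (t : ℝ) : ℝ := -1 + exp t * (1 - t * (3 - 2 * exp t + t))

noncomputable def M₁ (t : ℝ) : ℝ :=
  -1 + exp (2 * t) * (t - 1) - t * (3 + t) + exp t * (2 - 2 * t * (t - 1))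

noncomputable def M₁' (t : ℝ) : ℝ :=
  exp (2 * t) * (2 * t - 1) + exp t * (4 - 2 * t - 2 * t ^ 2) - 3 - 2 * t

theorem hasDerivAt_exp_two_mul (x : ℝ) :
    HasDerivAt (fun t => exp (2 * t)) (2 * exp (2 * x)) x := by
  simpa [mul_comm] using ((hasDerivAt_id x).const_mul 2).exp

theorem hasDerivAt_M₂ (x : ℝ) :
    HasDerivAt M₂ (exp x * (-2 - x * (5 + x) + exp x * (2 + 4 * x))) x := by
  have h := (hasDerivAt_exp x).mul ((hasDerivAt_const x 1).sub ((hasDerivAt_id x).mul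
    (((hasDerivAt_const x 3).sub ((hasDerivAt_exp x).const_mul 2)).add (hasDerivAt_id x))))
  refine (h.const_add (-1)).congr_deriv ?_
  simp only [id, Pi.add_apply, Pi.sub_apply, Pi.mul_apply]
  ring

theorem M₂_nonneg {t : ℝ} (ht : 0 ≤ t) : 0 ≤ M₂ t := by
  refine nonneg_of_hasDerivAt_of_deriv_nonneg (fun x _ => hasDerivAt_M₂ x)
    (by simp [M₂]) (fun x hx => ?_) ht
  have hbracket : 0 ≤ -2 - x * (5 + x) + exp x * (2 + 4 * x) := by
    have hexp : (x + 1) * (2 + 4 * x) ≤ exp x * (2 + 4 * x) :=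
      mul_le_mul_of_nonneg_right (add_one_le_exp x) (by linarith)
    nlinarith
  exact mul_nonneg (exp_pos x).le hbracket

theorem hasDerivAt_M₁' (x : ℝ) : HasDerivAt M₁' (2 * M₂ x) x := by
  have h := (((hasDerivAt_exp_two_mul x).mul (((hasDerivAt_id x).const_mul 2).sub_const 1)).add
    ((hasDerivAt_exp x).mul (((hasDerivAt_const x 4).sub ((hasDerivAt_id x).const_mul 2)).sub
      ((hasDerivAt_pow 2 x).const_mul 2)))).sub_const 3 |>.sub ((hasDerivAt_id x).const_mul 2)
  refine h.congr_deriv ?_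
  have hexp : exp (2 * x) = exp x * exp x := by rw [two_mul, exp_add]
  simp only [M₂, id, hexp, Pi.sub_apply]
  ring

theorem hasDerivAt_M₁ (x : ℝ) : HasDerivAt M₁ (M₁' x) x := by
  have h := (((hasDerivAt_exp_two_mul x).mul ((hasDerivAt_id x).sub_const 1)).const_add (-1)).sub
    ((hasDerivAt_id x).mul ((hasDerivAt_const x 3).add (hasDerivAt_id x))) |>.add
    ((hasDerivAt_exp x).mul ((hasDerivAt_const x 2).sub
      (((hasDerivAt_id x).const_mul 2).mul ((hasDerivAt_id x).sub_const 1))))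
  refine h.congr_deriv ?_
  simp only [M₁', id, Pi.add_apply, Pi.sub_apply, Pi.mul_apply]
  ring

theorem M₁'_nonneg {t : ℝ} (ht : 0 ≤ t) : 0 ≤ M₁' t :=
  nonneg_of_hasDerivAt_of_deriv_nonneg (fun x _ => hasDerivAt_M₁' x) (by norm_num [M₁'])
    (fun _ hx => mul_nonneg zero_le_two (M₂_nonneg hx)) ht

theorem M₁_nonneg {t : ℝ} (ht : 0 ≤ t) : 0 ≤ M₁ t :=
  nonneg_of_hasDerivAt_of_deriv_nonneg (fun x _ => hasDerivAt_M₁ x) (by norm_num [M₁])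
    (fun _ => M₁'_nonneg) ht

/-- `M₂(t) = −1 + e^t (1 − t(3 − 2e^t + t)) ≥ 0` for `t ≥ 0`, and consequently
`M₁(t) = −1 + e^{2t}(t − 1) − t(3 + t) + e^t(2 − 2t(t − 1)) ≥ 0` for `t ≥ 0`. -/
theorem M2_and_M1_nonneg :
    (∀ t : ℝ, 0 ≤ t → 0 ≤ -1 + exp t * (1 - t * (3 - 2 * exp t + t))) ∧
    (∀ t : ℝ, 0 ≤ t →
      0 ≤ -1 + exp (2 * t) * (t - 1) - t * (3 + t) + exp t * (2 - 2 * t * (t - 1))) :=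
  ⟨fun _ => M₂_nonneg, fun _ => M₁_nonneg⟩
end
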